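/- arXiv:0907.2356 — 5 statements merged into one kernel-verified Lean document; each statement's English description precedes it below -/
import Mathlib

section
/- Let G be a group, A an ordered abelian group, and l : G → A a function satisfying (L1) l(g) ≥ 0 and l(1) = 0, (L2) l(g) = l(g⁻¹), and (L3) for all g,f,h: 2·c(g,f) > 2·c(g,h) implies 2·c(g,h) = 2·c(f,h), where 2·c(g,f) := l(g) + l(f) − l(g⁻¹f). Then for all g, f ∈ G, l(g·f) ≤ l(g) + l(f). -/
/-! Putting `f = 1` in (L3) compares every doubled Gromov product `2c(g, h)` with
`2c(g, 1) = 2c(1, h) = 0`: if `2c(g, h) < 0`, then (L3) would force `2c(g, h) = 2c(1, h) = 0`.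
So all Gromov products are nonnegative, and `2c(g⁻¹, f) ≥ 0` is exactly `l (g * f) ≤ l g + l f`. -/

namespace LyndonLength

variable {G A : Type*} [Group G] [AddCommGroup A]

def doubledGromovProduct (l : G → A) (g f : G) : A :=
  l g + l f - l (g⁻¹ * f)

theorem doubledGromovProduct_one_left {l : G → A} (hl : l 1 = 0) (g : G) :
    doubledGromovProduct l 1 g = 0 := by
  simp [doubledGromovProduct, hl]

theorem doubledGromovProduct_one_right {l : G → A} (hl : l 1 = 0)
    (hinv : ∀ g, l g = l g⁻¹) (g : G) : doubledGromovProduct l g 1 = 0 := by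
  simp [doubledGromovProduct, hl, ← hinv]

theorem doubledGromovProduct_nonneg [LinearOrder A] {l : G → A} (hl : l 1 = 0)
    (hinv : ∀ g, l g = l g⁻¹)
    (hL3 : ∀ g f h, doubledGromovProduct l g f > doubledGromovProduct l g h →
      doubledGromovProduct l g h = doubledGromovProduct l f h)
    (g f : G) : 0 ≤ doubledGromovProduct l g f := by
  by_contra! hneg
  have hgt : doubledGromovProduct l g 1 > doubledGromovProduct l g f := by
    rwa [doubledGromovProduct_one_right hl hinv]
  have heq := hL3 g 1 f hgt
  rw [doubledGromovProduct_one_left hl] at heq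
  exact hneg.ne heq

end LyndonLength

theorem lyndon_length_subadditive_general {G A : Type*} [Group G]
    [AddCommGroup A] [LinearOrder A] [IsOrderedAddMonoid A] (l : G → A)
    (L1' : l 1 = 0)
    (L2 : ∀ g : G, l g = l g⁻¹)
    (L3 : ∀ g f h : G,
      (l g + l f - l (g⁻¹ * f)) > (l g + l h - l (g⁻¹ * h)) →
      (l g + l h - l (g⁻¹ * h)) = (l f + l h - l (f⁻¹ * h))) :
    ∀ g f : G, l (g * f) ≤ l g + l f := by
  intro g f
  have h := LyndonLength.doubledGromovProduct_nonneg L1' L2 L3 g⁻¹ f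
  rw [LyndonLength.doubledGromovProduct, inv_inv, ← L2] at h
  exact sub_nonneg.mp h

/-- a Lyndon length function (axioms (L1)-(L3), with doubled
Gromov products) is subadditive: `l (g * f) ≤ l g + l f`. -/
theorem lyndon_length_subadditive {G A : Type*} [Group G]
    [AddCommGroup A] [LinearOrder A] [IsOrderedAddMonoid A] (l : G → A)
    (L1 : ∀ g : G, 0 ≤ l g) (L1' : l 1 = 0)
    (L2 : ∀ g : G, l g = l g⁻¹)
    (L3 : ∀ g f h : G,
      (l g + l f - l (g⁻¹ * f)) > (l g + l h - l (g⁻¹ * h)) →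
      (l g + l h - l (g⁻¹ * h)) = (l f + l h - l (f⁻¹ * h))) :
    ∀ g f : G, l (g * f) ≤ l g + l f :=
  lyndon_length_subadditive_general l L1' L2 L3
end

section
/- In the group ℤⁿ equipped with the lexicographic order, for every k with 0 ≤ k ≤ n the subgroup E_k consisting of elements whose last n−k coordinates vanish is a convex subgroup, and every convex subgroup of ℤⁿ equals E_k for some k. -/
/-- Right lexicographic strict order on `ℤⁿ`: compare the last coordinate
where the two tuples differ. -/
def rlexLt {n : ℕ} (x y : Fin n → ℤ) : Prop :=
  ∃ k : Fin n, x k < y k ∧ ∀ j : Fin n, k < j → x j = y j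

def rlexLe {n : ℕ} (x y : Fin n → ℤ) : Prop := rlexLt x y ∨ x = y

/-- `E_k`: the subgroup of `ℤⁿ` of elements whose last `n - k` coordinates
(the coordinates of index `≥ k`) vanish. -/
def Ek (n k : ℕ) : AddSubgroup (Fin n → ℤ) where
  carrier := {x | ∀ j : Fin n, k ≤ (j : ℕ) → x j = 0}
  add_mem' := by intro a b ha hb j hj; simp [ha j hj, hb j hj]
  zero_mem' := by intro j hj; rfl
  neg_mem' := by intro a ha j hj; simp [ha j hj]

/-- A subgroup `B` is convex if `[0, b] ⊆ B` for every positive `b ∈ B`. -/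
def IsConvexSubgroup {n : ℕ} (B : AddSubgroup (Fin n → ℤ)) : Prop :=
  ∀ b ∈ B, ∀ c : Fin n → ℤ, rlexLe 0 c → rlexLe c b → c ∈ B

lemma mem_Ek {n k : ℕ} {x : Fin n → ℤ} :
    x ∈ Ek n k ↔ ∀ j : Fin n, k ≤ (j : ℕ) → x j = 0 := Iff.rfl

open Classical in
/-- each `E_k` (`0 ≤ k ≤ n`) is a convex subgroup of the right
lexicographically ordered `ℤⁿ`, and every convex subgroup equals some `E_k`. -/
theorem convex_subgroups_of_Zn (n : ℕ) :
    (∀ k ≤ n, IsConvexSubgroup (Ek n k)) ∧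
    (∀ B : AddSubgroup (Fin n → ℤ), IsConvexSubgroup B →
      ∃ k ≤ n, B = Ek n k) := by
  constructor
  · intro k _hk b hb c hc0 hcb
    rcases hc0 with hpos | hc0
    · rcases hcb with hlt | rfl
      · obtain ⟨m, hm, hma⟩ := hpos
        obtain ⟨m', hm', hm'a⟩ := hlt
        have hm0 : (0 : ℤ) < c m := hm
        intro j hj
        have hm'k : (m' : ℕ) < k := by
          by_contra h
          push_neg at h
          have hbm' : b m' = 0 := hb m' h
          have hcm' : c m' < 0 := by rw [hbm'] at hm'; exact hm'
          have hmm : m' < m := by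
            rcases lt_trichotomy m' m with h1 | h1 | h1
            · exact h1
            · rw [h1] at hcm'; linarith
            · have := hma m' h1; simp at this; omega
          have hcm : c m = b m := hm'a m hmm
          have hbm : b m = 0 := hb m (le_trans h (Fin.lt_iff_val_lt_val.mp hmm).le)
          rw [hcm, hbm] at hm0; linarith
        have hjm' : m' < j := Fin.lt_iff_val_lt_val.mpr (lt_of_lt_of_le hm'k hj)
        rw [hm'a j hjm']
        exact hb j hj
      · exact hb
    · intro j hj
      exact (congrFun hc0 j).symm
  · intro B hB
    by_cases hS : ∃ j : Fin n, ∃ b ∈ B, b j ≠ 0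
    · have hT : (Finset.univ.filter (fun j : Fin n => ∃ b ∈ B, b j ≠ 0)).Nonempty := by
        obtain ⟨j, hj⟩ := hS
        exact ⟨j, by simpa using hj⟩
      set T := Finset.univ.filter (fun j : Fin n => ∃ b ∈ B, b j ≠ 0) with hTdef
      set m := T.max' hT with hm
      have hmem : ∃ b ∈ B, b m ≠ 0 :=
        (Finset.mem_filter.mp (T.max'_mem hT)).2
      have htop : ∀ b ∈ B, ∀ j : Fin n, m < j → b j = 0 := by
        intro b hb j hj
        by_contra h
        have hjT : j ∈ T := Finset.mem_filter.mpr ⟨Finset.mem_univ _, b, hb, h⟩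
        exact absurd (T.le_max' j hjT) (not_le.mpr hj)
      obtain ⟨b, hbB, hbm⟩ := hmem
      obtain ⟨b', hb'B, hb'm⟩ : ∃ b' ∈ B, 0 < b' m := by
        rcases lt_or_gt_of_ne hbm with h | h
        · exact ⟨-b, neg_mem hbB, by simpa using h⟩
        · exact ⟨b, hbB, h⟩
      have hbig : b' + b' ∈ B := add_mem hb'B hb'B
      have hone : ∀ j : Fin n, j ≤ m → Pi.single j (1 : ℤ) ∈ B := by
        intro j hj
        apply hB _ hbig
        · left
          exact ⟨j, by simp, fun i hi => by
            simp [Pi.single_eq_of_ne (ne_of_gt hi)]⟩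
        · left
          refine ⟨m, ?_, fun i hi => ?_⟩
          · have h1 : (Pi.single j 1 : Fin n → ℤ) m ≤ 1 := by
              rcases eq_or_ne m j with rfl | hne
              · simp
              · rw [Pi.single_eq_of_ne hne 1]; norm_num
            simp only [Pi.add_apply]
            linarith
          · have h1 : (Pi.single j 1 : Fin n → ℤ) i = 0 :=
              Pi.single_eq_of_ne (ne_of_gt (lt_of_le_of_lt hj hi)) 1
            have h2 : b' i = 0 := htop b' hb'B i hi
            simp [h1, h2]
      refine ⟨(m : ℕ) + 1, m.isLt, ?_⟩
      ext x
      rw [mem_Ek]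
      constructor
      · intro hx j hj
        exact htop x hx j (Fin.lt_iff_val_lt_val.mpr (by omega))
      · intro hx
        have hxs : x = ∑ j : Fin n, x j • Pi.single j (1 : ℤ) := by
          funext i
          simp [Pi.single_apply]
        rw [hxs]
        apply AddSubgroup.sum_mem
        intro j _
        rcases le_or_gt j m with hjm | hjm
        · exact zsmul_mem (hone j hjm) _
        · have : x j = 0 := hx j (by have := Fin.lt_iff_val_lt_val.mp hjm; omega)
          rw [this, zero_smul]
          exact zero_mem B
    · refine ⟨0, Nat.zero_le n, ?_⟩
      ext x
      rw [mem_Ek]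
      constructor
      · intro hx j _
        by_contra h
        exact hS ⟨j, x, hx, h⟩
      · intro hx
        have : x = 0 := funext fun j => hx j (Nat.zero_le _)
        rw [this]
        exact zero_mem B
end

section
/- Let F be a free group on generators x₁, …, x_{2n} (n ≥ 1). Then the orientable surface group G = ⟨x₁,…,x_{2n} | [x₁,x₂]⋯[x_{2n−1},x_{2n}] = 1⟩ is isomorphic to the group G' = ⟨x₁,…,x_{2n} | x₁⋯x_{2n}·x₁⁻¹⋯x_{2n}⁻¹ = 1⟩. -/
/-!
Write `aⱼ = x₂ⱼ`, `bⱼ = x₂ⱼ₊₁` (indices from `0`) and `Bₖ = a₀⁻¹b₀⁻¹ ⋯ aₖ₋₁⁻¹bₖ₋₁⁻¹`.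
The substitution `aⱼ ↦ Bⱼ aⱼ`, `bⱼ ↦ bⱼ Bⱼ⁻¹` fixes every `aⱼ⁻¹bⱼ⁻¹`, hence every `Bₖ`;
so it is an automorphism of the free group, with inverse `aⱼ ↦ Bⱼ⁻¹ aⱼ`, `bⱼ ↦ bⱼ Bⱼ`.
By induction on `k` it sends `a₀b₀ ⋯ aₖ₋₁bₖ₋₁` to `[a₀,b₀] ⋯ [aₖ₋₁,bₖ₋₁] Bₖ⁻¹`, so it carries
`x₀ ⋯ x₂ₙ₋₁ · Bₙ` to `[a₀,b₀] ⋯ [aₙ₋₁,bₙ₋₁]`.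
-/

open scoped commutatorElement

/-- The relator `[x₁,x₂]⋯[x_{2n-1},x_{2n}]` in the free group on `2n` letters. -/
def surfRel1 (n : ℕ) : FreeGroup (Fin (2 * n)) :=
  (List.ofFn (fun i : Fin n =>
    ⁅FreeGroup.of (⟨2 * i.val, by have := i.isLt; omega⟩ : Fin (2 * n)),
      FreeGroup.of (⟨2 * i.val + 1, by have := i.isLt; omega⟩ : Fin (2 * n))⁆)).prod

/-- The relator `x₁⋯x_{2n} · x₁⁻¹⋯x_{2n}⁻¹` in the free group on `2n` letters. -/
def surfRel2 (n : ℕ) : FreeGroup (Fin (2 * n)) :=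
  (List.ofFn (fun i : Fin (2 * n) => FreeGroup.of i)).prod *
  (List.ofFn (fun i : Fin (2 * n) => (FreeGroup.of i)⁻¹)).prod

namespace SurfaceGroup

def presentedGroupCongr {α β : Type*} {rels : Set (FreeGroup α)} {rels' : Set (FreeGroup β)}
    (e : FreeGroup α ≃* FreeGroup β) (h : e '' rels = rels') :
    PresentedGroup rels ≃* PresentedGroup rels' :=
  QuotientGroup.congr _ _ e <| by
    rw [← h]
    exact Subgroup.map_normalClosure rels e.toMonoidHom e.surjective

section RangeProd

variable {M : Type*} [Monoid M]

def rangeProd (f : ℕ → M) (k : ℕ) : M := ((List.range k).map f).prod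

@[simp]
lemma rangeProd_zero (f : ℕ → M) : rangeProd f 0 = 1 := rfl

lemma rangeProd_succ (f : ℕ → M) (k : ℕ) : rangeProd f (k + 1) = rangeProd f k * f k :=
  List.prod_range_succ f k

lemma rangeProd_congr {f g : ℕ → M} {k : ℕ} (h : ∀ j < k, f j = g j) :
    rangeProd f k = rangeProd g k := by
  unfold rangeProd
  rw [List.map_congr_left fun j hj => h j (List.mem_range.mp hj)]

lemma map_rangeProd {N : Type*} [Monoid N] (φ : M →* N) (f : ℕ → M) (k : ℕ) :
    φ (rangeProd f k) = rangeProd (fun j => φ (f j)) k := by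
  rw [rangeProd, map_list_prod, List.map_map]
  rfl

lemma rangeProd_two_mul (f : ℕ → M) (k : ℕ) :
    rangeProd f (2 * k) = rangeProd (fun j => f (2 * j) * f (2 * j + 1)) k := by
  induction k with
  | zero => rfl
  | succ k ih => rw [Nat.mul_succ, rangeProd_succ, rangeProd_succ, ih, rangeProd_succ, mul_assoc]

lemma prod_ofFn_eq_rangeProd (f : ℕ → M) (m : ℕ) :
    (List.ofFn fun i : Fin m => f i).prod = rangeProd f m := by
  rw [rangeProd, List.ofFn_eq_map, ← List.map_coe_finRange_eq_range, List.map_map]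
  rfl

end RangeProd

section Twist

variable {G : Type*} [Group G] {a b a' b' : ℕ → G} {k : ℕ}

lemma rangeProd_inv_mul_inv_of_twist {c : ℕ → G}
    (h : ∀ j < k, a' j = c j * a j ∧ b' j = b j * (c j)⁻¹) :
    rangeProd (fun j => (a' j)⁻¹ * (b' j)⁻¹) k = rangeProd (fun j => (a j)⁻¹ * (b j)⁻¹) k :=
  rangeProd_congr fun j hj => by
    rw [(h j hj).1, (h j hj).2]
    group

lemma rangeProd_mul_of_twist
    (h : ∀ j < k, a' j = rangeProd (fun i => (a i)⁻¹ * (b i)⁻¹) j * a j ∧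
      b' j = b j * (rangeProd (fun i => (a i)⁻¹ * (b i)⁻¹) j)⁻¹) :
    rangeProd (fun j => a' j * b' j) k =
      rangeProd (fun j => ⁅a j, b j⁆) k * (rangeProd (fun i => (a i)⁻¹ * (b i)⁻¹) k)⁻¹ := by
  induction k with
  | zero => simp
  | succ k ih =>
    rw [rangeProd_succ, ih fun j hj => h j (by omega), (h k k.lt_succ_self).1,
      (h k k.lt_succ_self).2, rangeProd_succ, rangeProd_succ, commutatorElement_def]
    group

end Twist

section FreeGroup

variable {n : ℕ}

def gen (n i : ℕ) : FreeGroup (Fin (2 * n)) :=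
  if h : i < 2 * n then FreeGroup.of ⟨i, h⟩ else 1

lemma gen_of_lt {i : ℕ} (h : i < 2 * n) : gen n i = FreeGroup.of ⟨i, h⟩ := dif_pos h

lemma exists_of_eq_gen (i : Fin (2 * n)) :
    ∃ j < n, FreeGroup.of i = gen n (2 * j) ∨ FreeGroup.of i = gen n (2 * j + 1) := by
  refine ⟨i / 2, by omega, ?_⟩
  rcases Nat.mod_two_eq_zero_or_one i with h | h
  · left
    rw [gen_of_lt (by omega)]
    exact congrArg _ (Fin.ext (show (i : ℕ) = 2 * (i / 2) by omega))
  · right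
    rw [gen_of_lt (by omega)]
    exact congrArg _ (Fin.ext (show (i : ℕ) = 2 * (i / 2) + 1 by omega))

def invProd (n k : ℕ) : FreeGroup (Fin (2 * n)) :=
  rangeProd (fun j => (gen n (2 * j))⁻¹ * (gen n (2 * j + 1))⁻¹) k

def twistHom (c : ℕ → FreeGroup (Fin (2 * n))) :
    FreeGroup (Fin (2 * n)) →* FreeGroup (Fin (2 * n)) :=
  FreeGroup.lift fun i =>
    if i.val % 2 = 0 then c (i / 2) * FreeGroup.of i else FreeGroup.of i * (c (i / 2))⁻¹

lemma twistHom_gen (c : ℕ → FreeGroup (Fin (2 * n))) :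
    ∀ j < n, twistHom c (gen n (2 * j)) = c j * gen n (2 * j) ∧
      twistHom c (gen n (2 * j + 1)) = gen n (2 * j + 1) * (c j)⁻¹ := by
  intro j hj
  have hodd : (2 * j + 1) / 2 = j := by omega
  rw [gen_of_lt (by omega), gen_of_lt (by omega)]
  refine ⟨?_, ?_⟩ <;> simp [twistHom, hodd]

lemma twistHom_invProd (c : ℕ → FreeGroup (Fin (2 * n))) {k : ℕ} (hk : k ≤ n) :
    twistHom c (invProd n k) = invProd n k := by
  rw [invProd, map_rangeProd]
  simp only [map_mul, map_inv]
  exact rangeProd_inv_mul_inv_of_twist fun j hj => twistHom_gen c j (by omega)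

lemma twistHom_comp_twistHom {c c' : ℕ → FreeGroup (Fin (2 * n))}
    (h : ∀ j < n, twistHom c (c' j) * c j = 1) :
    (twistHom c).comp (twistHom c') = MonoidHom.id _ := by
  ext i
  obtain ⟨j, hj, hi | hi⟩ := exists_of_eq_gen i <;>
    simp only [MonoidHom.comp_apply, MonoidHom.id_apply, hi, (twistHom_gen _ j hj).1,
      (twistHom_gen _ j hj).2, map_mul, map_inv]
  · rw [← mul_assoc, h j hj, one_mul]
  · rw [mul_assoc, ← mul_inv_rev, h j hj, inv_one, mul_one]

def twistEquiv (n : ℕ) : FreeGroup (Fin (2 * n)) ≃* FreeGroup (Fin (2 * n)) :=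
  MonoidHom.toMulEquiv (twistHom (invProd n)) (twistHom (invProd n)⁻¹)
    (twistHom_comp_twistHom fun j hj => by
      rw [Pi.inv_apply, twistHom_invProd _ hj.le, mul_inv_cancel])
    (twistHom_comp_twistHom fun j hj => by
      rw [Pi.inv_apply, map_inv, twistHom_invProd _ hj.le, inv_mul_cancel])

lemma surfRel1_eq_rangeProd (n : ℕ) :
    surfRel1 n = rangeProd (fun j => ⁅gen n (2 * j), gen n (2 * j + 1)⁆) n := by
  rw [surfRel1, ← prod_ofFn_eq_rangeProd]
  congr
  funext j
  rw [gen_of_lt, gen_of_lt]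

lemma surfRel2_eq_rangeProd (n : ℕ) :
    surfRel2 n = rangeProd (fun j => gen n (2 * j) * gen n (2 * j + 1)) n * invProd n n := by
  have hgen : ∀ i : Fin (2 * n), FreeGroup.of i = gen n i := fun i => (gen_of_lt i.isLt).symm
  simp only [surfRel2, hgen]
  rw [prod_ofFn_eq_rangeProd (gen n), prod_ofFn_eq_rangeProd fun i => (gen n i)⁻¹,
    rangeProd_two_mul, rangeProd_two_mul, invProd]

lemma twistEquiv_surfRel2 (n : ℕ) : twistEquiv n (surfRel2 n) = surfRel1 n := by
  change twistHom (invProd n) _ = _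
  rw [surfRel2_eq_rangeProd, surfRel1_eq_rangeProd, map_mul, map_rangeProd,
    twistHom_invProd _ le_rfl]
  simp only [map_mul]
  rw [rangeProd_mul_of_twist (twistHom_gen (invProd n)), invProd, inv_mul_cancel_right]

end FreeGroup

end SurfaceGroup

theorem surface_group_iso_general (n : ℕ) :
    Nonempty (PresentedGroup ({surfRel1 n} : Set (FreeGroup (Fin (2 * n)))) ≃*
      PresentedGroup ({surfRel2 n} : Set (FreeGroup (Fin (2 * n))))) :=
  ⟨(SurfaceGroup.presentedGroupCongr (SurfaceGroup.twistEquiv n) <| by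
    rw [Set.image_singleton, SurfaceGroup.twistEquiv_surfRel2]).symm⟩

/-- for `n ≥ 1`, the orientable surface group
`⟨x₁,…,x_{2n} ∣ [x₁,x₂]⋯[x_{2n-1},x_{2n}]⟩` is isomorphic to
`⟨x₁,…,x_{2n} ∣ x₁⋯x_{2n} x₁⁻¹⋯x_{2n}⁻¹⟩`. -/
theorem surface_group_iso (n : ℕ) (hn : 1 ≤ n) :
    Nonempty (PresentedGroup ({surfRel1 n} : Set (FreeGroup (Fin (2 * n)))) ≃*
      PresentedGroup ({surfRel2 n} : Set (FreeGroup (Fin (2 * n))))) :=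
  surface_group_iso_general n
end

section
/- For n ≥ 3, the non-orientable surface group G = ⟨x₁,…,x_n | x₁²x₂²⋯x_n² = 1⟩ is isomorphic to G' = ⟨x₁,…,x_n | x₁·(x₂⋯x_{n−1}x_n)·x₁⁻¹ = x_n⁻¹·x_{n−1}⋯x₂⟩, which is an HNN extension of the free group F(x₂,…,x_n) along cyclic subgroups generated by words of equal length n−1. -/
/- Throughout, `n ≥ 3` is encoded as `n = m + 3`.
Generators: `x_j` corresponds to the index `j - 1 : Fin (m + 3)`. -/

/-- The relator `x₁²x₂²⋯x_n²`. -/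
def nonorRelG (m : ℕ) : FreeGroup (Fin (m + 3)) :=
  (List.ofFn (fun i : Fin (m + 3) => (FreeGroup.of i) ^ 2)).prod

/-- `x₂⋯x_{n-1}x_n` as a word in the free group on `x₁,…,x_n`. -/
def nonorW (m : ℕ) : FreeGroup (Fin (m + 3)) :=
  (List.ofFn (fun i : Fin (m + 2) =>
    FreeGroup.of (⟨i.val + 1, by have := i.isLt; omega⟩ : Fin (m + 3)))).prod

/-- `x_n⁻¹·x_{n-1}⋯x₂` as a word in the free group on `x₁,…,x_n`. -/
def nonorW' (m : ℕ) : FreeGroup (Fin (m + 3)) :=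
  (FreeGroup.of (⟨m + 2, by omega⟩ : Fin (m + 3)))⁻¹ *
  (List.ofFn (fun i : Fin (m + 1) =>
    FreeGroup.of (⟨m + 1 - i.val, by omega⟩ : Fin (m + 3)))).prod

/-- The relator `x₁·(x₂⋯x_n)·x₁⁻¹·(x_n⁻¹·x_{n-1}⋯x₂)⁻¹` of `G'`. -/
def nonorRelG' (m : ℕ) : FreeGroup (Fin (m + 3)) :=
  FreeGroup.of (⟨0, by omega⟩ : Fin (m + 3)) * nonorW m *
    (FreeGroup.of (⟨0, by omega⟩ : Fin (m + 3)))⁻¹ * (nonorW' m)⁻¹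

/- In the free group `F(x₂,…,x_n)` on `n - 1 = m + 2` letters, the index
`j : Fin (m + 2)` corresponds to `x_{j+2}`. -/

/-- `u = x₂⋯x_n ∈ F(x₂,…,x_n)`. -/
def nonorU (m : ℕ) : FreeGroup (Fin (m + 2)) :=
  (List.ofFn (fun i : Fin (m + 2) => FreeGroup.of i)).prod

/-- `v = x_n⁻¹·x_{n-1}⋯x₂ ∈ F(x₂,…,x_n)`. -/
def nonorV (m : ℕ) : FreeGroup (Fin (m + 2)) :=
  (FreeGroup.of (⟨m + 1, by omega⟩ : Fin (m + 2)))⁻¹ *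
  (List.ofFn (fun i : Fin (m + 1) =>
    FreeGroup.of (⟨m - i.val, by omega⟩ : Fin (m + 2)))).prod


/-!
Write `P_j = x₁⋯x_j` and `Q_j = x₁⁻¹⋯x_j⁻¹`. The endomorphism of `F(x₁,…,x_n)` given by
`x_j ↦ Q_{j-1} x_j Q_{j-1}⁻¹` for `j < n` and `x_n ↦ Q_{n-1} x_n` sends `x₁²⋯x_{n-1}²` to the
telescoping product `P_{n-1} Q_{n-1}⁻¹`, hence the surface relator to `P_n Q_{n-1} x_n`; the same
construction with `P` in place of `Q` is its inverse. The new relator says `x₁ u x₁⁻¹ = v` for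
`u = x₂⋯x_n` and `v = x_n⁻¹x_{n-1}⋯x₂`, which is the defining relation of the HNN extension of
`F(x₂,…,x_n)` with stable letter `x₁` along `⟨u⟩ ≅ ⟨v⟩, u ↦ v`. This isomorphism exists because
`u` and `v` are nontrivial reduced words, hence of infinite order in the torsion-free free group.
-/

open Subgroup

namespace FreeGroup

variable {α : Type*}

theorem prod_map_of_eq_mk (l : List α) : (l.map of).prod = mk (l.map (·, true)) := by
  induction l with
  | nil => simp [one_eq_mk]
  | cons a l ih => simp [ih]; rfl

theorem isReduced_map_pos (l : List α) : IsReduced (l.map (·, true)) :=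
  (List.isChain_map _).mpr (List.isChain_iff_getElem.mpr fun _ _ _ => rfl)

variable [DecidableEq α]

theorem norm_mk_of_isReduced {L : List (α × Bool)} (h : IsReduced L) : (mk L).norm = L.length := by
  rw [norm, toWord_mk, h.reduce_eq]

theorem norm_prod_map_of (l : List α) : ((l.map of).prod).norm = l.length := by
  rw [prod_map_of_eq_mk, norm_mk_of_isReduced (isReduced_map_pos l), List.length_map]

theorem norm_inv_of_mul_prod_map_of {a : α} {l : List α} (ha : l.head? ≠ some a) :
    ((of a)⁻¹ * (l.map of).prod).norm = l.length + 1 := by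
  have hred : IsReduced ((a, false) :: l.map (·, true)) := by
    cases l with
    | nil => exact IsReduced.singleton
    | cons b l =>
      refine isReduced_cons_cons.mpr ⟨fun hab => ?_, isReduced_map_pos (b :: l)⟩
      exact (ha (congrArg some hab.symm)).elim
  have hmk : (of a)⁻¹ * (l.map of).prod = mk ((a, false) :: l.map (·, true)) := by
    rw [prod_map_of_eq_mk, of, inv_mk, mul_mk]; rfl
  rw [hmk, norm_mk_of_isReduced hred, List.length_cons, List.length_map]

end FreeGroup

section InfiniteCyclic

variable {G : Type*} [Group G] {x y : G}

theorem injective_zpowersHom (hx : ¬IsOfFinOrder x) : Function.Injective (zpowersHom G x) :=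
  (injective_zpow_iff_not_isOfFinOrder.mpr hx).comp Multiplicative.toAdd.injective

noncomputable def zpowersEquivOfNotIsOfFinOrder (hx : ¬IsOfFinOrder x) :
    Multiplicative ℤ ≃* zpowers x :=
  (MonoidHom.ofInjective (injective_zpowersHom hx)).trans
    (MulEquiv.subgroupCongr (range_zpowersHom x))

theorem zpowersEquivOfNotIsOfFinOrder_ofAdd_one (hx : ¬IsOfFinOrder x) :
    zpowersEquivOfNotIsOfFinOrder hx (Multiplicative.ofAdd 1) = ⟨x, mem_zpowers x⟩ := by
  ext
  simp [zpowersEquivOfNotIsOfFinOrder, MonoidHom.ofInjective_apply]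

noncomputable def zpowersEquivZPowersOfNotIsOfFinOrder (hx : ¬IsOfFinOrder x)
    (hy : ¬IsOfFinOrder y) : zpowers x ≃* zpowers y :=
  (zpowersEquivOfNotIsOfFinOrder hx).symm.trans (zpowersEquivOfNotIsOfFinOrder hy)

theorem zpowersEquivZPowersOfNotIsOfFinOrder_apply_self (hx : ¬IsOfFinOrder x)
    (hy : ¬IsOfFinOrder y) :
    zpowersEquivZPowersOfNotIsOfFinOrder hx hy ⟨x, mem_zpowers x⟩ = ⟨y, mem_zpowers y⟩ := by
  rw [zpowersEquivZPowersOfNotIsOfFinOrder, MulEquiv.trans_apply,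
    (MulEquiv.symm_apply_eq _).mpr (zpowersEquivOfNotIsOfFinOrder_ofAdd_one hx).symm,
    zpowersEquivOfNotIsOfFinOrder_ofAdd_one]

end InfiniteCyclic

namespace PresentedGroup

variable {α β : Type*}

def equivOfFreeGroupEquiv (e : FreeGroup α ≃* FreeGroup β) {r : FreeGroup α} {s : FreeGroup β}
    (h : e r = s) : PresentedGroup {r} ≃* PresentedGroup {s} :=
  QuotientGroup.congr _ _ e <| by
    rw [← h, ← Set.image_singleton]
    exact map_normalClosure {r} e.toMonoidHom e.surjective

end PresentedGroup

namespace FreeGroup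

variable {α : Type*}

def hnnRelator (u v : FreeGroup α) : FreeGroup (Option α) :=
  of none * map some u * (of none)⁻¹ * (map some v)⁻¹

variable {u v : FreeGroup α} {φ : zpowers u ≃* zpowers v}

noncomputable def hnnRelatorToHNNExtension (hφ : φ ⟨u, mem_zpowers u⟩ = ⟨v, mem_zpowers v⟩) :
    PresentedGroup {hnnRelator u v} →* HNNExtension (FreeGroup α) (zpowers u) (zpowers v) φ :=
  PresentedGroup.toGroup (f := fun o => o.elim HNNExtension.t (HNNExtension.of ∘ of)) <| by
    have hsome : (lift fun o => o.elim HNNExtension.t (HNNExtension.of ∘ of)).comp (map some) =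
        (HNNExtension.of : FreeGroup α →* HNNExtension _ (zpowers u) (zpowers v) φ) :=
      ext_hom _ _ fun a => by simp
    have ht := HNNExtension.t_mul_of (φ := φ) ⟨u, mem_zpowers u⟩
    rw [hφ] at ht
    rintro r rfl
    simp only [hnnRelator, _root_.map_mul, _root_.map_inv, lift_apply_of, Option.elim_none,
      ← MonoidHom.comp_apply, hsome, ht]
    group

theorem of_none_mul_mk_map_some_zpow (k : ℤ) :
    PresentedGroup.of none * PresentedGroup.mk {hnnRelator u v} (map some (u ^ k)) =
      PresentedGroup.mk _ (map some (v ^ k)) * PresentedGroup.of none := by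
  have h : SemiconjBy (PresentedGroup.of none) (PresentedGroup.mk {hnnRelator u v} (map some u))
      (PresentedGroup.mk _ (map some v)) := by
    have := PresentedGroup.one_of_mem (Set.mem_singleton (hnnRelator u v))
    rw [hnnRelator, _root_.map_mul, _root_.map_mul, _root_.map_mul, _root_.map_inv, _root_.map_inv,
      mul_inv_eq_one, mul_inv_eq_iff_eq_mul] at this
    exact this
  simpa only [_root_.map_zpow] using (h.zpow_right k).eq

noncomputable def hnnExtensionToHNNRelator (hφ : φ ⟨u, mem_zpowers u⟩ = ⟨v, mem_zpowers v⟩) :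
    HNNExtension (FreeGroup α) (zpowers u) (zpowers v) φ →* PresentedGroup {hnnRelator u v} :=
  HNNExtension.lift ((PresentedGroup.mk _).comp (map some)) (PresentedGroup.of none) <| by
    rintro ⟨_, k, rfl⟩
    have hφk : (φ ⟨u ^ k, k, rfl⟩ : FreeGroup α) = v ^ k := by
      rw [show (⟨u ^ k, k, rfl⟩ : zpowers u) = ⟨u, mem_zpowers u⟩ ^ k from rfl, map_zpow, hφ]
      rfl
    rw [MonoidHom.comp_apply, MonoidHom.comp_apply, hφk]
    exact of_none_mul_mk_map_some_zpow k

noncomputable def hnnRelatorEquivHNNExtension (hφ : φ ⟨u, mem_zpowers u⟩ = ⟨v, mem_zpowers v⟩) :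
    PresentedGroup {hnnRelator u v} ≃* HNNExtension (FreeGroup α) (zpowers u) (zpowers v) φ :=
  MonoidHom.toMulEquiv (hnnRelatorToHNNExtension hφ) (hnnExtensionToHNNRelator hφ)
    (PresentedGroup.ext fun
      | none => by simp [hnnRelatorToHNNExtension, hnnExtensionToHNNRelator]
      | some _ => by simp [hnnRelatorToHNNExtension, hnnExtensionToHNNRelator]; rfl)
    (HNNExtension.hom_ext (ext_hom _ _ fun a => by
      simp only [MonoidHom.comp_apply, hnnExtensionToHNNRelator, HNNExtension.lift_of]
      exact PresentedGroup.toGroup.of _) (by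
      simp [hnnRelatorToHNNExtension, hnnExtensionToHNNRelator]))

end FreeGroup

section PrefixProd

variable {M N G H : Type*} [Monoid M] [Monoid N] [Group G] [Group H]

def prefixProd (x : ℕ → M) (k : ℕ) : M := ((List.range k).map x).prod

@[simp]
theorem prefixProd_zero (x : ℕ → M) : prefixProd x 0 = 1 := rfl

theorem prefixProd_succ (x : ℕ → M) (k : ℕ) : prefixProd x (k + 1) = prefixProd x k * x k :=
  List.prod_range_succ x k

theorem prefixProd_succ' (x : ℕ → M) (k : ℕ) :
    prefixProd x (k + 1) = x 0 * prefixProd (fun i => x (i + 1)) k :=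
  List.prod_range_succ' x k

theorem prefixProd_congr {x y : ℕ → M} {k : ℕ} (h : ∀ j < k, x j = y j) :
    prefixProd x k = prefixProd y k :=
  congrArg List.prod (List.map_congr_left fun j hj => h j (List.mem_range.mp hj))

theorem map_prefixProd (f : M →* N) (x : ℕ → M) (k : ℕ) :
    f (prefixProd x k) = prefixProd (fun j => f (x j)) k := by
  rw [prefixProd, map_list_prod, List.map_map]
  rfl

theorem prod_ofFn_eq_prefixProd (x : ℕ → M) (k : ℕ) :
    (List.ofFn fun i : Fin k => x i).prod = prefixProd x k := by
  rw [prefixProd, List.ofFn_eq_map, ← List.map_coe_finRange_eq_range, List.map_map]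
  rfl

theorem inv_prefixProd_inv (x : ℕ → G) (k : ℕ) :
    (prefixProd x⁻¹ k)⁻¹ = prefixProd (fun i => x (k - 1 - i)) k := by
  induction k with
  | zero => simp
  | succ k ih =>
    rw [prefixProd_succ, mul_inv_rev, ih, prefixProd_succ']
    simp only [Pi.inv_apply, inv_inv, Nat.add_sub_cancel, Nat.sub_zero]
    congr 1
    exact prefixProd_congr fun j hj => by congr 1; omega

theorem prefixProd_sq_conj (x : ℕ → G) (k : ℕ) :
    prefixProd (fun j => (prefixProd x⁻¹ j * x j * (prefixProd x⁻¹ j)⁻¹) ^ 2) k =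
      prefixProd x k * (prefixProd x⁻¹ k)⁻¹ := by
  induction k with
  | zero => simp
  | succ k ih =>
    rw [prefixProd_succ, ih, prefixProd_succ, prefixProd_succ, Pi.inv_apply, sq]
    group

theorem map_prefixProd_eq_inv_prefixProd_inv (f : G →* H) {x : ℕ → G} {y : ℕ → H} {k : ℕ}
    (h : ∀ j < k, f (x j) = prefixProd y⁻¹ j * y j * (prefixProd y⁻¹ j)⁻¹) :
    f (prefixProd x k) = (prefixProd y⁻¹ k)⁻¹ := by
  induction k with
  | zero => simp
  | succ k ih =>
    rw [prefixProd_succ, map_mul, ih fun j hj => h j (by omega), h k (by omega),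
      prefixProd_succ, Pi.inv_apply]
    group

end PrefixProd

section SurfaceRelator

open FreeGroup

variable (k : ℕ)

def natGen (j : ℕ) : FreeGroup (Fin (k + 1)) :=
  if h : j < k + 1 then of ⟨j, h⟩ else 1

theorem of_mk_eq_natGen {j : ℕ} (hj : j < k + 1) :
    (of ⟨j, hj⟩ : FreeGroup (Fin (k + 1))) = natGen k j := by
  rw [natGen, dif_pos hj]

theorem natGen_val (i : Fin (k + 1)) : natGen k i = of i :=
  (of_mk_eq_natGen k i.isLt).symm

noncomputable def prefixConjHom (w : ℕ → FreeGroup (Fin (k + 1))) :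
    FreeGroup (Fin (k + 1)) →* FreeGroup (Fin (k + 1)) :=
  lift fun i =>
    if (i : ℕ) < k then prefixProd w i * of i * (prefixProd w i)⁻¹ else prefixProd w k * of i

variable {k}

theorem prefixConjHom_natGen_of_lt (w : ℕ → FreeGroup (Fin (k + 1))) {j : ℕ} (hj : j < k) :
    prefixConjHom k w (natGen k j) = prefixProd w j * natGen k j * (prefixProd w j)⁻¹ := by
  rw [← of_mk_eq_natGen k (by omega : j < k + 1), prefixConjHom, lift_apply_of, if_pos hj]

theorem prefixConjHom_natGen_self (w : ℕ → FreeGroup (Fin (k + 1))) :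
    prefixConjHom k w (natGen k k) = prefixProd w k * natGen k k := by
  rw [← of_mk_eq_natGen k k.lt_succ_self, prefixConjHom, lift_apply_of, if_neg k.lt_irrefl]

theorem prefixConjHom_comp_prefixConjHom {w w' : ℕ → FreeGroup (Fin (k + 1))}
    (h : ∀ j ≤ k, prefixConjHom k w' (prefixProd w j) = (prefixProd w' j)⁻¹) :
    (prefixConjHom k w').comp (prefixConjHom k w) = MonoidHom.id _ := by
  refine ext_hom _ _ fun i => ?_
  rw [MonoidHom.comp_apply, MonoidHom.id_apply, ← natGen_val]
  rcases (Nat.lt_succ_iff.mp i.isLt).lt_or_eq with hi | hi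
  · rw [prefixConjHom_natGen_of_lt w hi, _root_.map_mul, _root_.map_mul, _root_.map_inv,
      h _ hi.le, prefixConjHom_natGen_of_lt w' hi]
    group
  · rw [hi, prefixConjHom_natGen_self, _root_.map_mul, h k le_rfl, prefixConjHom_natGen_self]
    group

theorem prefixConjHom_inv_prefixProd {j : ℕ} (hj : j ≤ k) :
    prefixConjHom k (natGen k)⁻¹ (prefixProd (natGen k) j) = (prefixProd (natGen k)⁻¹ j)⁻¹ :=
  map_prefixProd_eq_inv_prefixProd_inv _ fun _ hi => prefixConjHom_natGen_of_lt _ (by omega)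

theorem prefixConjHom_prefixProd_inv {j : ℕ} (hj : j ≤ k) :
    prefixConjHom k (natGen k) (prefixProd (natGen k)⁻¹ j) = (prefixProd (natGen k) j)⁻¹ := by
  simpa only [inv_inv] using map_prefixProd_eq_inv_prefixProd_inv (prefixConjHom k (natGen k))
    (y := (natGen k)⁻¹) fun i hi => by
      rw [Pi.inv_apply, _root_.map_inv, prefixConjHom_natGen_of_lt _ (by omega), inv_inv]
      group

variable (k)

noncomputable def surfaceAut : FreeGroup (Fin (k + 1)) ≃* FreeGroup (Fin (k + 1)) :=
  MonoidHom.toMulEquiv (prefixConjHom k (natGen k)⁻¹) (prefixConjHom k (natGen k))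
    (prefixConjHom_comp_prefixConjHom fun _ => prefixConjHom_prefixProd_inv)
    (prefixConjHom_comp_prefixConjHom fun _ => prefixConjHom_inv_prefixProd)

theorem surfaceAut_prefixProd_sq :
    surfaceAut k (prefixProd (fun j => natGen k j ^ 2) (k + 1)) =
      prefixProd (natGen k) k * natGen k k * prefixProd (natGen k)⁻¹ k * natGen k k := by
  have hsq : prefixProd (fun j => prefixConjHom k (natGen k)⁻¹ (natGen k j) ^ 2) k =
      prefixProd (natGen k) k * (prefixProd (natGen k)⁻¹ k)⁻¹ := by
    rw [← prefixProd_sq_conj]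
    exact prefixProd_congr fun j hj => by rw [prefixConjHom_natGen_of_lt _ hj]
  change prefixConjHom k (natGen k)⁻¹ _ = _
  rw [map_prefixProd, prefixProd_succ]
  simp only [_root_.map_pow]
  rw [hsq, prefixConjHom_natGen_self, sq]
  group

end SurfaceRelator

section NonorientableSurface

open FreeGroup

theorem nonorRelG_eq (m : ℕ) :
    nonorRelG m = prefixProd (fun j => natGen (m + 2) j ^ 2) (m + 3) := by
  rw [nonorRelG, ← prod_ofFn_eq_prefixProd]
  simp only [natGen_val]

theorem nonorW_eq (m : ℕ) : nonorW m = prefixProd (fun i => natGen (m + 2) (i + 1)) (m + 2) := by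
  rw [nonorW, ← prod_ofFn_eq_prefixProd]
  simp only [of_mk_eq_natGen]

theorem nonorW'_eq (m : ℕ) :
    nonorW' m = (natGen (m + 2) (m + 2))⁻¹ *
      (prefixProd (fun i => natGen (m + 2) (i + 1))⁻¹ (m + 1))⁻¹ := by
  rw [nonorW', inv_prefixProd_inv]
  simp only [of_mk_eq_natGen]
  rw [prod_ofFn_eq_prefixProd (fun j => natGen (m + 2) (m + 1 - j))]
  congr 1
  exact prefixProd_congr fun j hj => by congr 1; omega

theorem nonorRelG'_eq (m : ℕ) :
    nonorRelG' m = prefixProd (natGen (m + 2)) (m + 2) * natGen (m + 2) (m + 2) *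
      prefixProd (natGen (m + 2))⁻¹ (m + 2) * natGen (m + 2) (m + 2) := by
  have hP : prefixProd (natGen (m + 2)) (m + 2) * natGen (m + 2) (m + 2) =
      natGen (m + 2) 0 * prefixProd (fun i => natGen (m + 2) (i + 1)) (m + 2) := by
    rw [← prefixProd_succ, prefixProd_succ']
  rw [nonorRelG', nonorW_eq, nonorW'_eq, hP, prefixProd_succ' (natGen (m + 2))⁻¹,
    of_mk_eq_natGen]
  simp only [Pi.inv_def]
  group

theorem norm_nonorU (m : ℕ) : (nonorU m).norm = m + 2 := by
  rw [nonorU, List.ofFn_eq_map, norm_prod_map_of, List.length_finRange]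

theorem norm_nonorV (m : ℕ) : (nonorV m).norm = m + 2 := by
  have h := norm_inv_of_mul_prod_map_of (a := (⟨m + 1, by omega⟩ : Fin (m + 2)))
    (l := List.ofFn fun i : Fin (m + 1) => (⟨m - i, by omega⟩ : Fin (m + 2)))
    (by simp [List.ofFn_succ])
  rwa [List.map_ofFn, List.length_ofFn] at h

theorem map_succ_nonorU (m : ℕ) : map Fin.succ (nonorU m) = nonorW m := by
  simp only [nonorU, nonorW, map_list_prod, List.map_ofFn]
  rfl

theorem map_succ_nonorV (m : ℕ) : map Fin.succ (nonorV m) = nonorW' m := by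
  simp only [nonorV, nonorW', _root_.map_mul, _root_.map_inv, map_list_prod, List.map_ofFn,
    Function.comp_def, map.of]
  congr with i
  rw [Fin.succ_mk]
  congr 2
  omega

theorem freeGroupCongr_finSuccEquiv_nonorRelG' (m : ℕ) :
    freeGroupCongr (finSuccEquiv (m + 2)) (nonorRelG' m) = hnnRelator (nonorU m) (nonorV m) := by
  have hsucc : ∀ w, map (finSuccEquiv (m + 2)) (map Fin.succ w) = map some w := fun w => by
    rw [map.comp, show finSuccEquiv (m + 2) ∘ Fin.succ = some from funext finSuccEquiv_succ]
  rw [nonorRelG', ← map_succ_nonorU, ← map_succ_nonorV]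
  simp [hnnRelator, hsucc]

end NonorientableSurface

/-- for `n = m + 3 ≥ 3`, the non-orientable surface group
`G = ⟨x₁,…,x_n ∣ x₁²⋯x_n²⟩` is isomorphic to
`G' = ⟨x₁,…,x_n ∣ x₁(x₂⋯x_n)x₁⁻¹ = x_n⁻¹x_{n-1}⋯x₂⟩`, and `G'` is an HNN
extension of the free group `F(x₂,…,x_n)` along the cyclic subgroups generated
by `u = x₂⋯x_n` and `v = x_n⁻¹x_{n-1}⋯x₂`, two words of equal length `n - 1`. -/
theorem nonorientable_surface_group_is_HNN (m : ℕ) :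
    Nonempty (PresentedGroup ({nonorRelG m} : Set (FreeGroup (Fin (m + 3)))) ≃*
      PresentedGroup ({nonorRelG' m} : Set (FreeGroup (Fin (m + 3))))) ∧
    (nonorU m).norm = m + 2 ∧ (nonorV m).norm = m + 2 ∧
    ∃ φ : Subgroup.zpowers (nonorU m) ≃* Subgroup.zpowers (nonorV m),
      φ ⟨nonorU m, Subgroup.mem_zpowers _⟩ = ⟨nonorV m, Subgroup.mem_zpowers _⟩ ∧
      Nonempty (PresentedGroup ({nonorRelG' m} : Set (FreeGroup (Fin (m + 3)))) ≃*
        HNNExtension (FreeGroup (Fin (m + 2)))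
          (Subgroup.zpowers (nonorU m)) (Subgroup.zpowers (nonorV m)) φ) := by
  have hU : ¬IsOfFinOrder (nonorU m) := not_isOfFinOrder_of_isMulTorsionFree <| by
    rw [Ne, ← FreeGroup.norm_eq_zero, norm_nonorU]
    omega
  have hV : ¬IsOfFinOrder (nonorV m) := not_isOfFinOrder_of_isMulTorsionFree <| by
    rw [Ne, ← FreeGroup.norm_eq_zero, norm_nonorV]
    omega
  have hφ := zpowersEquivZPowersOfNotIsOfFinOrder_apply_self hU hV
  have hsurface : surfaceAut (m + 2) (nonorRelG m) = nonorRelG' m := by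
    rw [nonorRelG_eq, surfaceAut_prefixProd_sq, nonorRelG'_eq]
  exact ⟨⟨PresentedGroup.equivOfFreeGroupEquiv _ hsurface⟩, norm_nonorU m, norm_nonorV m, _, hφ,
    ⟨(PresentedGroup.equivOfFreeGroupEquiv _ (freeGroupCongr_finSuccEquiv_nonorRelG' m)).trans
      (FreeGroup.hnnRelatorEquivHNNExtension hφ)⟩⟩
end

section
/- Let F be a free group, f and h cyclically reduced elements of F with respect to a fixed basis. If the reduced words f^m and h^n have a common initial segment of length at least |f| + |h| for some m, n > 0, then f and h commute. -/
/-- An element of a free group is cyclically reduced if the first letter of its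
reduced word is not the inverse of its last letter. -/
def CyclicallyReduced {X : Type*} [DecidableEq X] (w : FreeGroup X) : Prop :=
  ∀ a ∈ w.toWord.head?, ∀ b ∈ w.toWord.getLast?, a ≠ (b.1, !b.2)

namespace CommonPrefixAux

open List

/-! ### Combinatorics on words -/

/-- `p` has period `k` (in the weak, index sense). -/
def Per {α : Type*} (l : List α) (k : ℕ) : Prop :=
  ∀ i, i + k < l.length → l[i + k]? = l[i]?

theorem per_zero {α : Type*} (l : List α) : Per l 0 := fun i _ => by simp

theorem per_sub {α : Type*} {l : List α} {q r : ℕ} (hq : Per l q) (hr : Per l r)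
    (hrq : r ≤ q) (hsum : q + r ≤ l.length) : Per l (q - r) := by
  intro i hi
  rcases lt_or_ge (i + q) l.length with hA | hB
  · have h1 : (i + (q - r)) + r = i + q := by omega
    have h2 := hr (i + (q - r)) (by omega)
    rw [h1] at h2
    rw [← h2, hq i hA]
  · have hir : r ≤ i := by omega
    have h1 : (i - r) + q = i + (q - r) := by omega
    have h2 := hq (i - r) (by omega)
    rw [h1] at h2
    have h3 := hr (i - r) (by omega)
    have h4 : (i - r) + r = i := by omega
    rw [h4] at h3
    rw [h2, h3]

theorem per_mod {α : Type*} {l : List α} {q r : ℕ} (hq : Per l q) (hr : Per l r)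
    (hsum : q + r ≤ l.length) : Per l (r % q) := by
  have key : ∀ t : ℕ, t * q ≤ r → Per l (r - t * q) := by
    intro t
    induction t with
    | zero => intro _; simpa using hr
    | succ t ih =>
      intro ht
      rw [Nat.succ_mul] at ht
      have h1 : t * q ≤ r := by omega
      have h2 := ih h1
      have h3 : q ≤ r - t * q := by omega
      have h4 : r - (t + 1) * q = (r - t * q) - q := by
        rw [Nat.succ_mul]; omega
      rw [h4]
      exact per_sub h2 hq h3 (by omega)
  have hdm := Nat.div_add_mod r q
  have h5 : r % q = r - (r / q) * q := by
    rw [Nat.mul_comm] at hdm; omega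
  rw [h5]
  exact key _ (Nat.div_mul_le_self r q)

theorem per_gcd {α : Type*} {l : List α} (q : ℕ) : ∀ r : ℕ, Per l q → Per l r →
    q + r ≤ l.length → Per l (Nat.gcd q r) := by
  induction q using Nat.strong_induction_on with
  | _ q ih =>
    intro r hq hr hsum
    rcases Nat.eq_zero_or_pos q with h0 | hpos
    · subst h0; simpa using hr
    · rw [Nat.gcd_rec]
      exact ih (r % q) (Nat.mod_lt r hpos) q (per_mod hq hr (by omega)) hq
        (by have := Nat.mod_le r q; omega)

theorem drop_prefix_of_per {α : Type*} {l : List α} {g : ℕ} (hp : Per l g) :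
    l.drop g <+: l := by
  have : l.drop g = l.take (l.length - g) := by
    apply List.ext_getElem?
    intro i
    rw [List.getElem?_drop, List.getElem?_take]
    rw [add_comm g i]
    split
    · next h =>
      exact hp i (by omega)
    · next h =>
      exact List.getElem?_eq_none (by omega)
  rw [this]
  exact List.take_prefix _ _

theorem take_mul_eq_flatten {α : Type*} {l : List α} {g : ℕ}
    (hpre : l.drop g <+: l) :
    ∀ k : ℕ, g * k ≤ l.length → l.take (g * k) = List.flatten (List.replicate k (l.take g)) := by
  intro k
  induction k with
  | zero => simp
  | succ k ih =>
    intro hk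
    have hk' : g * k + g ≤ l.length := by rw [← Nat.mul_succ]; exact hk
    have hgk : g * k ≤ l.length := by omega
    have h1 : g * (k + 1) = g + g * k := by ring
    rw [h1, List.take_add]
    have h2 : (l.drop g).take (g * k) = l.take (g * k) := by
      obtain ⟨t, ht⟩ := hpre
      have hlen : g * k ≤ (l.drop g).length := by
        simp only [List.length_drop]; omega
      conv_rhs => rw [← ht]
      rw [List.take_append_of_le_length hlen]
    rw [h2, ih hgk, List.replicate_succ, List.flatten_cons]

theorem flatten_replicate_add {α : Type*} (x y : ℕ) (t : List α) :
    List.flatten (List.replicate (x + y) t)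
      = List.flatten (List.replicate x t) ++ List.flatten (List.replicate y t) := by
  rw [List.replicate_add, List.flatten_append]

theorem per_of_prefix_flatten {α : Type*} {p a : List α} {m : ℕ} (hm : 0 < m)
    (hpre : p <+: List.flatten (List.replicate m a)) : Per p a.length := by
  set J := List.flatten (List.replicate m a) with hJ
  have hJeq : J = a ++ List.flatten (List.replicate (m - 1) a) := by
    rw [hJ]
    obtain ⟨m', rfl⟩ : ∃ m', m = m' + 1 := ⟨m - 1, by omega⟩
    simp [List.replicate_succ]
  have hJeq' : J = List.flatten (List.replicate (m - 1) a) ++ a := by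
    rw [hJ]
    obtain ⟨m', rfl⟩ : ∃ m', m = m' + 1 := ⟨m - 1, by omega⟩
    rw [List.replicate_succ']
    simp
  have hdrop : J.drop a.length = List.flatten (List.replicate (m - 1) a) := by
    rw [hJeq, List.drop_left]
  have hdpre : J.drop a.length <+: J := by
    rw [hdrop]
    exact hJeq' ▸ List.prefix_append _ _
  have hplen : p.length ≤ J.length := hpre.length_le
  intro i hi
  obtain ⟨t, ht⟩ := hpre
  have hp1 : p[i + a.length]? = J[i + a.length]? := by
    rw [← ht, List.getElem?_append_left hi]
  have hp2 : p[i]? = J[i]? := by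
    rw [← ht, List.getElem?_append_left (by omega)]
  rw [hp1, hp2]
  obtain ⟨t2, ht2⟩ := hdpre
  have hlen2 : i < (J.drop a.length).length := by
    simp only [List.length_drop]
    omega
  have e1 : J[i + a.length]? = (J.drop a.length)[i]? := by
    rw [List.getElem?_drop, add_comm]
  have e2 : (J.drop a.length)[i]? = J[i]? := by
    conv_rhs => rw [← ht2]
    rw [List.getElem?_append_left hlen2]
  rw [e1, e2]

/-- The key combinatorics-on-words fact: if `p` is a common prefix of powers of `a` and `b`
with `|a| + |b| ≤ |p|`, then `a ++ b = b ++ a`. -/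
theorem append_comm_of_common_prefix {α : Type*} {p a b : List α} {m n : ℕ}
    (hm : 0 < m) (hn : 0 < n)
    (ha : a ≠ []) (hb : b ≠ [])
    (hpa : p <+: List.flatten (List.replicate m a))
    (hpb : p <+: List.flatten (List.replicate n b))
    (hlen : a.length + b.length ≤ p.length) :
    a ++ b = b ++ a := by
  set q := a.length with hq
  set r := b.length with hr
  have hq0 : 0 < q := List.length_pos_iff.2 ha
  have hr0 : 0 < r := List.length_pos_iff.2 hb
  have hPq : Per p q := per_of_prefix_flatten hm hpa
  have hPr : Per p r := per_of_prefix_flatten hn hpb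
  set g := Nat.gcd q r with hg
  have hPg : Per p g := per_gcd q r hPq hPr hlen
  have hg0 : 0 < g := Nat.gcd_pos_of_pos_left r hq0
  have hgq : g ∣ q := Nat.gcd_dvd_left q r
  have hgr : g ∣ r := Nat.gcd_dvd_right q r
  have hdpre : p.drop g <+: p := drop_prefix_of_per hPg
  -- a is a prefix of p
  have hap : a <+: p := by
    apply List.prefix_of_prefix_length_le _ hpa (by omega)
    obtain ⟨m', rfl⟩ : ∃ m', m = m' + 1 := ⟨m - 1, by omega⟩
    rw [List.replicate_succ, List.flatten_cons]
    exact List.prefix_append _ _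
  have hbp : b <+: p := by
    apply List.prefix_of_prefix_length_le _ hpb (by omega)
    obtain ⟨n', rfl⟩ : ∃ n', n = n' + 1 := ⟨n - 1, by omega⟩
    rw [List.replicate_succ, List.flatten_cons]
    exact List.prefix_append _ _
  have hae : a = p.take q := List.prefix_iff_eq_take.1 hap
  have hbe : b = p.take r := List.prefix_iff_eq_take.1 hbp
  have hqe : q = g * (q / g) := (Nat.mul_div_cancel' hgq).symm
  have hre : r = g * (r / g) := (Nat.mul_div_cancel' hgr).symm
  have ha2 : a = List.flatten (List.replicate (q / g) (p.take g)) := by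
    rw [hae]
    conv_lhs => rw [hqe]
    exact take_mul_eq_flatten hdpre _ (by omega)
  have hb2 : b = List.flatten (List.replicate (r / g) (p.take g)) := by
    rw [hbe]
    conv_lhs => rw [hre]
    exact take_mul_eq_flatten hdpre _ (by omega)
  rw [ha2, hb2, ← flatten_replicate_add, ← flatten_replicate_add, Nat.add_comm]

/-! ### Reduced words and powers in free groups -/

/-- The non-cancellation relation. -/
def NC {X : Type*} (a b : X × Bool) : Prop := ¬(a.1 = b.1 ∧ a.2 = !b.2)

theorem reduce_eq_self_of_chain' {X : Type*} [DecidableEq X] :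
    ∀ {L : List (X × Bool)}, List.Chain' NC L → FreeGroup.reduce L = L := by
  intro L
  induction L with
  | nil => intro _; rfl
  | cons x L ih =>
    intro hc
    have hcL : List.Chain' NC L := hc.tail
    rw [FreeGroup.reduce.cons, ih hcL]
    cases L with
    | nil => rfl
    | cons y L' =>
      have hxy : NC x y := List.isChain_cons_cons.1 hc |>.1
      simp only
      rw [if_neg hxy]

theorem chain'_of_reduce_eq_self {X : Type*} [DecidableEq X] :
    ∀ {L : List (X × Bool)}, FreeGroup.reduce L = L → List.Chain' NC L := by
  intro L
  induction L with
  | nil => intro _; exact List.isChain_nil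
  | cons x L ih =>
    intro h
    cases L with
    | nil => exact List.isChain_singleton x
    | cons y L' =>
      -- analyze reduce (x :: y :: L')
      rw [FreeGroup.reduce.cons] at h
      rcases hred : FreeGroup.reduce (y :: L') with _ | ⟨hd, tl⟩
      · rw [hred] at h
        exact absurd (congrArg List.length h) (by simp)
      · rw [hred] at h
        simp only at h
        by_cases hx : x.1 = hd.1 ∧ x.2 = !hd.2
        · rw [if_pos hx] at h
          have := congrArg List.length h
          have hlen := FreeGroup.Red.length_le (FreeGroup.reduce.red (L := y :: L'))
          rw [hred] at hlen
          simp at this hlen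
          omega
        · rw [if_neg hx] at h
          injection h with h1 h2
          have hyd : FreeGroup.reduce (y :: L') = y :: L' := by
            rw [hred]; injection h2 with h3 h4; rw [h3, h4]
          refine List.isChain_cons_cons.2 ⟨?_, ih hyd⟩
          injection h2 with h3 _
          rw [h3] at hx
          exact hx

theorem toWord_chain' {X : Type*} [DecidableEq X] (w : FreeGroup X) :
    List.Chain' NC w.toWord :=
  chain'_of_reduce_eq_self (FreeGroup.reduce_toWord w)

/-- For a cyclically reduced `w`, the reduced word of `w ^ k` is the `k`-fold
concatenation of the reduced word of `w`. -/
theorem toWord_pow {X : Type*} [DecidableEq X] (w : FreeGroup X)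
    (hw : CyclicallyReduced w) (k : ℕ) :
    (w ^ k).toWord = List.flatten (List.replicate k w.toWord) := by
  rcases eq_or_ne w.toWord [] with hnil | hne
  · have : w = 1 := FreeGroup.toWord_eq_nil_iff.1 hnil
    subst this
    simp [hnil]
  · -- wrap condition
    have hwrap : ∀ x ∈ w.toWord.getLast?, ∀ y ∈ w.toWord.head?, NC x y := by
      intro x hx y hy
      rintro ⟨h1, h2⟩
      exact hw y hy x hx (by cases y; cases x; simp_all)
    have hchain : ∀ j : ℕ, List.Chain' NC (List.flatten (List.replicate j w.toWord)) ∧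
        (0 < j → (List.flatten (List.replicate j w.toWord)).head? = w.toWord.head?) := by
      intro j
      induction j with
      | zero => exact ⟨List.isChain_nil, fun hj => absurd hj (lt_irrefl 0)⟩
      | succ j ih =>
        rw [List.replicate_succ, List.flatten_cons]
        constructor
        · apply List.IsChain.append (toWord_chain' w) ih.1
          intro x hx y hy
          rcases Nat.eq_zero_or_pos j with h0 | hj
          · subst h0; simp at hy
          · rw [ih.2 hj] at hy
            exact hwrap x hx y hy
        · intro _
          rw [List.head?_append_of_ne_nil _ hne]
    have hred : FreeGroup.reduce (List.flatten (List.replicate k w.toWord))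
        = List.flatten (List.replicate k w.toWord) :=
      reduce_eq_self_of_chain' (hchain k).1
    calc (w ^ k).toWord = ((FreeGroup.mk w.toWord) ^ k).toWord := by rw [FreeGroup.mk_toWord]
      _ = (FreeGroup.mk (List.flatten (List.replicate k w.toWord))).toWord := by
          rw [FreeGroup.pow_mk]
      _ = List.flatten (List.replicate k w.toWord) := by rw [FreeGroup.toWord_mk, hred]

end CommonPrefixAux

/-- if `f, h` are cyclically reduced and for some `m, n > 0` the
reduced words of `f^m` and `h^n` have a common initial segment of length at
least `|f| + |h|`, then `f` and `h` commute. -/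
theorem commute_of_long_common_prefix {X : Type*} [DecidableEq X]
    (f h : FreeGroup X) (hf : CyclicallyReduced f) (hh : CyclicallyReduced h)
    (m n : ℕ) (hm : 0 < m) (hn : 0 < n) (p : List (X × Bool))
    (hlen : f.norm + h.norm ≤ p.length)
    (hpf : p <+: (f ^ m).toWord) (hph : p <+: (h ^ n).toWord) :
    Commute f h := by
  rcases eq_or_ne f.toWord [] with hfe | hfe
  · have : f = 1 := FreeGroup.toWord_eq_nil_iff.1 hfe
    subst this; exact Commute.one_left h
  rcases eq_or_ne h.toWord [] with hhe | hhe
  · have : h = 1 := FreeGroup.toWord_eq_nil_iff.1 hhe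
    subst this; exact Commute.one_right f
  have hfw := CommonPrefixAux.toWord_pow f hf m
  have hhw := CommonPrefixAux.toWord_pow h hh n
  rw [hfw] at hpf
  rw [hhw] at hph
  have hnormf : f.norm = f.toWord.length := rfl
  have hnormh : h.norm = h.toWord.length := rfl
  have hcomm : f.toWord ++ h.toWord = h.toWord ++ f.toWord :=
    CommonPrefixAux.append_comm_of_common_prefix hm hn hfe hhe hpf hph (by omega)
  have : f * h = h * f := by
    calc f * h = FreeGroup.mk f.toWord * FreeGroup.mk h.toWord := by
          rw [FreeGroup.mk_toWord, FreeGroup.mk_toWord]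
      _ = FreeGroup.mk (f.toWord ++ h.toWord) := FreeGroup.mul_mk
      _ = FreeGroup.mk (h.toWord ++ f.toWord) := by rw [hcomm]
      _ = h * f := by rw [← FreeGroup.mul_mk, FreeGroup.mk_toWord, FreeGroup.mk_toWord]
  exact this
end
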